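/- There exists a finite simple graph G of order 14 with χ(G) = 5 such that: for every proper coloring of G with exactly 5 color classes C_1, …, C_5 ordered so that |C_1| ≤ ⋯ ≤ |C_5|, one has |C_1| = 2 and |C_2| = ⋯ = |C_5| = 3, the subgraph induced by C_1 ∪ C_i is a complete bipartite graph with bipartition (C_1, C_i) for each 2 ≤ i ≤ 5, and for every i, every v ∈ C_i and every j ≠ i the number of edges from v to C_j is at least 2; yet es_χ(G) ≤ 4 < 6 = ⌊14/5⌋·⌊14/5 + 1⌋. In particular, for r = 5 and n ≡ 4 (mod 5), conditions (1)–(3) of the necessity theorem are not sufficient for attaining the bound es_χ(G) = ⌊n/r⌋·⌊n/r + 1⌋. -/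

import Mathlib

open Function

/-- The chromatic-stability index: the minimum number of edges whose removal
decreases the chromatic number (0 if no such edge set exists, e.g. for edgeless graphs). -/
noncomputable def esChi {V : Type*} [Fintype V] (G : SimpleGraph V) : ℕ :=
  sInf {k | ∃ F : Finset (Sym2 V),
    ↑F ⊆ G.edgeSet ∧ F.card = k ∧
    (G.deleteEdges ↑F).chromaticNumber < G.chromaticNumber}

open scoped Classical in
/-- The color class of color `i` under the coloring `c`, as a `Finset`. -/
noncomputable def classOf {V : Type*} [Fintype V] {G : SimpleGraph V} {α : Type*}
    (c : G.Coloring α) (i : α) : Finset V :=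
  Finset.univ.filter fun v => c v = i

open scoped Classical in
/-- The number of edges of `G` with one endpoint in `A` and the other in `B`
(for disjoint `A`, `B`). -/
noncomputable def eCC {V : Type*} [Fintype V] (G : SimpleGraph V) (A B : Finset V) : ℕ :=
  ((A ×ˢ B).filter fun p => G.Adj p.1 p.2).card

/-- `c*`: the minimum size of a color class over all proper colorings of `G`
using exactly `χ(G)` colors. -/
noncomputable def cStar {V : Type*} [Fintype V] (G : SimpleGraph V) : ℕ :=
  sInf {k | ∃ (c : G.Coloring (Fin G.chromaticNumber.toNat))
      (i : Fin G.chromaticNumber.toNat),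
    Surjective c ∧ k = (classOf c i).card}

/-- The chromatic bondage number: the minimum number of edges between two distinct
color classes, over all proper colorings of `G` using exactly `χ(G)` colors. -/
noncomputable def rhoChi {V : Type*} [Fintype V] (G : SimpleGraph V) : ℕ :=
  sInf {k | ∃ (c : G.Coloring (Fin G.chromaticNumber.toNat))
      (i j : Fin G.chromaticNumber.toNat),
    Surjective c ∧ i ≠ j ∧ k = eCC G (classOf c i) (classOf c j)}

/-!
Vertices 0 and 1 form row 0; the other twelve form a 4 × 3 grid, vertex `2 + 3 i + j` lying in
row `i + 1` and column `j + 1` (vertices 0 and 1 get column 0). Two vertices are adjacent iff they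
lie in different rows and either in different columns or on one of four extra edges joining
vertices of the same column. The rows give a 5-colouring, and the columns a 4-colouring once the
extra edges are deleted, so `es_χ ≤ 4`. No four vertices are independent, hence `χ = 5` and the
classes of a sorted 5-colouring have sizes 2, 3, 3, 3, 3. The extra edges are chosen so that the
column-3 vertex of each grid row lies in no independent triple except its row; so every
5-colouring is the row colouring up to a permutation of the colours, and the remaining
conditions only need to be checked on the row colouring.
-/

section ColorClasses

variable {V α : Type*} [Fintype V] {G : SimpleGraph V}

theorem mem_classOf {c : G.Coloring α} {i : α} {v : V} : v ∈ classOf c i ↔ c v = i := by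
  simp [classOf]

theorem classOf_eq_filter [DecidableEq α] (c : G.Coloring α) (i : α) :
    classOf c i = Finset.univ.filter (c · = i) := by
  ext v
  simp [mem_classOf]

theorem not_adj_of_mem_classOf {c : G.Coloring α} {i : α} {u v : V} (hu : u ∈ classOf c i)
    (hv : v ∈ classOf c i) : ¬G.Adj u v :=
  c.not_adj_of_mem_colorClass (mem_classOf.1 hu) (mem_classOf.1 hv)

theorem isIndepSet_classOf (c : G.Coloring α) (i : α) : G.IsIndepSet (classOf c i : Set V) :=
  fun _ hu _ hv _ => not_adj_of_mem_classOf hu hv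

theorem card_classOf_le {k : ℕ} (hG : G.IndepSetFree (k + 1)) (c : G.Coloring α) (i : α) :
    (classOf c i).card ≤ k := by
  by_contra! hk
  obtain ⟨t, hts, ht⟩ := Finset.exists_subset_card_eq (Nat.succ_le_of_lt hk)
  exact hG t ⟨(isIndepSet_classOf c i).mono (Finset.coe_subset.2 hts), ht⟩

theorem sum_card_classOf [Fintype α] (c : G.Coloring α) :
    ∑ i, (classOf c i).card = Fintype.card V := by
  classical
  simp only [classOf_eq_filter]
  exact (Finset.card_eq_sum_card_fiberwise fun v _ => Finset.mem_univ (c v)).symm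

theorem not_colorable_of_indepSetFree {k n : ℕ} (hG : G.IndepSetFree (k + 1))
    (hV : n * k < Fintype.card V) : ¬G.Colorable n := by
  rintro ⟨c⟩
  have hle := Finset.sum_le_card_nsmul Finset.univ (fun i => (classOf c i).card) k
    fun i _ => card_classOf_le hG c i
  rw [sum_card_classOf, Finset.card_univ, Fintype.card_fin, smul_eq_mul] at hle
  omega

theorem card_classOf_of_forall_le {r k : ℕ} (c : G.Coloring (Fin (r + 1)))
    (hk : ∀ i, (classOf c i).card ≤ k) (h0 : ∀ i, (classOf c 0).card ≤ (classOf c i).card)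
    (hV : Fintype.card V + 1 = (r + 1) * k) :
    (classOf c 0).card + 1 = k ∧ ∀ i ≠ 0, (classOf c i).card = k := by
  have hsum := sum_card_classOf c
  rw [Fin.sum_univ_succ] at hsum
  have hrest : ∑ i : Fin r, (classOf c i.succ).card ≤ r * k := by
    simpa using Finset.sum_le_card_nsmul Finset.univ _ k fun (i : Fin r) _ => hk i.succ
  have hmin : r * (classOf c 0).card ≤ ∑ i : Fin r, (classOf c i.succ).card := by
    simpa using Finset.card_nsmul_le_sum Finset.univ _ _ fun (i : Fin r) _ => h0 i.succ
  have hcard0 : (classOf c 0).card + 1 = k := by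
    rw [add_one_mul] at hV
    nlinarith
  refine ⟨hcard0, fun i hi => ?_⟩
  obtain ⟨j, rfl⟩ := Fin.exists_succ_eq.2 hi
  have hall : ∑ i : Fin r, (classOf c i.succ).card = ∑ _ : Fin r, k := by
    simp only [Finset.sum_const, Finset.card_univ, Fintype.card_fin, smul_eq_mul]
    rw [add_one_mul] at hV
    omega
  exact (Finset.sum_eq_sum_iff_of_le fun i _ => hk i.succ).1 hall j (Finset.mem_univ j)

theorem classOf_apply_eq_of_comp {β : Type*} {c : G.Coloring α} {c' : G.Coloring β}
    {σ : β → α} (hσ : Injective σ) (h : ∀ v, c v = σ (c' v)) (b : β) :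
    classOf c (σ b) = classOf c' b := by
  ext v
  simp only [mem_classOf, h, hσ.eq_iff]

theorem eCC_singleton [DecidableRel G.Adj] (v : V) (B : Finset V) :
    eCC G {v} B = (B.filter (G.Adj v)).card := by
  rw [eCC, Finset.filter_congr_decidable, Finset.singleton_product, Finset.filter_map,
    Finset.card_map]
  rfl

theorem esChi_le_of_colorable_deleteEdges {F : Finset (Sym2 V)} (hF : ↑F ⊆ G.edgeSet) {k : ℕ}
    (hk : (G.deleteEdges F).Colorable k) (hlt : k < G.chromaticNumber) : esChi G ≤ F.card :=
  Nat.sInf_le ⟨F, hF, rfl, hk.chromaticNumber_le.trans_lt hlt⟩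

end ColorClasses

theorem indepSetFree_four_of_forall_lt {V : Type*} [LinearOrder V] {G : SimpleGraph V}
    (h : ∀ p q r s : V, p < q → q < r → r < s →
      G.Adj p q ∨ G.Adj p r ∨ G.Adj p s ∨ G.Adj q r ∨ G.Adj q s ∨ G.Adj r s) :
    G.IndepSetFree 4 := by
  intro t ht
  let f := t.orderEmbOfFin ht.card_eq
  have hind {i j : Fin 4} (hij : i < j) : ¬G.Adj (f i) (f j) :=
    ht.isIndepSet (t.orderEmbOfFin_mem _ i) (t.orderEmbOfFin_mem _ j) (f.injective.ne hij.ne)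
  rcases h (f 0) (f 1) (f 2) (f 3) (f.strictMono (by decide)) (f.strictMono (by decide))
    (f.strictMono (by decide)) with h | h | h | h | h | h <;> exact hind (by decide) h

namespace Order14

def rowOf (v : Fin 14) : Fin 5 := if h : v.val < 2 then 0 else ⟨(v.val - 2) / 3 + 1, by omega⟩

def colOf (v : Fin 14) : Fin 4 := if h : v.val < 2 then 0 else ⟨(v.val - 2) % 3 + 1, by omega⟩

def extraEdges : Finset (Sym2 (Fin 14)) := {s(8, 11), s(9, 12), s(4, 10), s(7, 13)}

def graph : SimpleGraph (Fin 14) where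
  Adj u v := rowOf u ≠ rowOf v ∧ (colOf u ≠ colOf v ∨ s(u, v) ∈ extraEdges)
  symm := ⟨fun u v h => ⟨h.1.symm, by rw [Sym2.eq_swap]; exact h.2.imp Ne.symm id⟩⟩
  loopless := ⟨fun _ h => h.1 rfl⟩

instance : DecidableRel graph.Adj := fun _ _ => inferInstanceAs (Decidable (_ ∧ _))

def rowColoring : graph.Coloring (Fin 5) := SimpleGraph.Coloring.mk rowOf fun h => h.1

def colColoring : (graph.deleteEdges extraEdges).Coloring (Fin 4) :=
  SimpleGraph.Coloring.mk colOf fun h => by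
    rw [SimpleGraph.deleteEdges_adj] at h
    exact h.1.2.resolve_right h.2

theorem mem_classOf_rowColoring {a : Fin 5} {v : Fin 14} :
    v ∈ classOf rowColoring a ↔ rowOf v = a :=
  mem_classOf

theorem card_classOf_rowColoring_zero : (classOf rowColoring 0).card = 2 := by
  rw [classOf_eq_filter]
  decide

theorem card_classOf_rowColoring_of_ne_zero {a : Fin 5} (ha : a ≠ 0) :
    (classOf rowColoring a).card = 3 := by
  rw [classOf_eq_filter]
  revert a
  decide

theorem extraEdges_subset_edgeSet : ↑extraEdges ⊆ graph.edgeSet := by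
  intro e he
  simp only [extraEdges, Finset.coe_insert, Finset.coe_singleton, Set.mem_insert_iff,
    Set.mem_singleton_iff] at he
  rcases he with rfl | rfl | rfl | rfl <;> decide

theorem card_extraEdges : extraEdges.card = 4 := by decide

theorem indepSetFree_four : graph.IndepSetFree 4 :=
  indepSetFree_four_of_forall_lt (by decide)

theorem chromaticNumber_eq_five : graph.chromaticNumber = 5 :=
  SimpleGraph.chromaticNumber_eq_iff_colorable_not_colorable.2
    ⟨⟨rowColoring⟩, not_colorable_of_indepSetFree indepSetFree_four (by simp)⟩

theorem esChi_le_four : esChi graph ≤ 4 :=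
  card_extraEdges ▸ esChi_le_of_colorable_deleteEdges extraEdges_subset_edgeSet ⟨colColoring⟩
    (by rw [chromaticNumber_eq_five]; norm_num)

theorem adj_of_rowOf_eq_zero : ∀ u v, rowOf u = 0 → rowOf v ≠ 0 → graph.Adj u v := by
  decide

theorem rowOf_eq_of_not_adj : ∀ w x y, colOf w = 3 → y ≠ w → x ≠ y →
    ¬graph.Adj w x → ¬graph.Adj w y → ¬graph.Adj x y → rowOf x = rowOf w := by
  decide

theorem adj_iff_of_mem_classOf_rowColoring : ∀ a ≠ 0, ∀ u v,
    (u ∈ classOf rowColoring 0 ∨ u ∈ classOf rowColoring a) →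
    (v ∈ classOf rowColoring 0 ∨ v ∈ classOf rowColoring a) →
    (graph.Adj u v ↔
      (u ∈ classOf rowColoring 0 ∧ v ∈ classOf rowColoring a) ∨
      (u ∈ classOf rowColoring a ∧ v ∈ classOf rowColoring 0)) := by
  simp only [mem_classOf_rowColoring]
  decide

theorem two_le_eCC_classOf_rowColoring : ∀ v b, rowOf v ≠ b →
    2 ≤ eCC graph {v} (classOf rowColoring b) := by
  simp only [eCC_singleton, classOf_eq_filter]
  decide

section Rigidity

variable {α : Type*} (c : graph.Coloring α)

theorem classOf_subset_classOf_rowColoring_zero {w : Fin 14} (hw : rowOf w = 0) :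
    classOf c (c w) ⊆ classOf rowColoring 0 := by
  intro x hx
  by_contra hx0
  exact not_adj_of_mem_classOf (mem_classOf.2 rfl) hx
    (adj_of_rowOf_eq_zero w x hw (mt mem_classOf_rowColoring.2 hx0))

theorem classOf_subset_classOf_rowColoring {w : Fin 14} (hw : colOf w = 3)
    (hcard : 3 ≤ (classOf c (c w)).card) : classOf c (c w) ⊆ classOf rowColoring (rowOf w) := by
  intro x hx
  obtain ⟨y, hy, hywx⟩ := Finset.exists_mem_notMem_of_card_lt_card
    ((Finset.card_le_two : ({w, x} : Finset (Fin 14)).card ≤ 2).trans_lt hcard)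
  simp only [Finset.mem_insert, Finset.mem_singleton, not_or] at hywx
  have hwK : w ∈ classOf c (c w) := mem_classOf.2 rfl
  exact mem_classOf_rowColoring.2 <| rowOf_eq_of_not_adj w x y hw hywx.1 (Ne.symm hywx.2)
    (not_adj_of_mem_classOf hwK hx) (not_adj_of_mem_classOf hwK hy) (not_adj_of_mem_classOf hx hy)

end Rigidity

def anchor (a : Fin 5) : Fin 14 := ⟨3 * a + 1, by omega⟩

theorem rowOf_anchor : ∀ a, rowOf (anchor a) = a := by decide

theorem colOf_anchor : ∀ {a}, a ≠ 0 → colOf (anchor a) = 3 := by decide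

theorem exists_comp_rowOf (c : graph.Coloring (Fin 5)) (hc : Surjective c)
    (h0 : ∀ i, (classOf c 0).card ≤ (classOf c i).card) :
    ∃ σ : Fin 5 → Fin 5, Injective σ ∧ σ 0 = 0 ∧ ∀ v, c v = σ (rowOf v) := by
  obtain ⟨hcard0, hcard⟩ := card_classOf_of_forall_le (r := 4) (k := 3) c
    (card_classOf_le indepSetFree_four c) h0 rfl
  have hsub0 := classOf_subset_classOf_rowColoring_zero c (w := anchor 0) rfl
  have hc1 : c (anchor 0) = 0 := by
    by_contra h
    have := Finset.card_le_card hsub0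
    rw [hcard _ h, card_classOf_rowColoring_zero] at this
    omega
  have hrow0 : classOf c (c (anchor 0)) = classOf rowColoring 0 := by
    refine Finset.eq_of_subset_of_card_le hsub0 ?_
    rw [hc1, card_classOf_rowColoring_zero]
    omega
  have hrow : ∀ a, classOf c (c (anchor a)) = classOf rowColoring a := by
    intro a
    rcases eq_or_ne a 0 with rfl | ha
    · exact hrow0
    have hca : c (anchor a) ≠ 0 := by
      intro h
      have := mem_classOf.2 (h.trans hc1.symm)
      rw [hrow0, mem_classOf_rowColoring, rowOf_anchor] at this
      exact ha this
    have h3 := hcard _ hca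
    refine Finset.eq_of_subset_of_card_le ?_ ?_
    · simpa only [rowOf_anchor] using classOf_subset_classOf_rowColoring c (colOf_anchor ha) h3.ge
    · rw [h3, card_classOf_rowColoring_of_ne_zero ha]
  have hσ (v : Fin 14) : c v = c (anchor (rowOf v)) :=
    mem_classOf.1 ((hrow (rowOf v)).symm ▸ mem_classOf_rowColoring.2 rfl)
  have hsurj : Surjective (c ∘ anchor) := fun i =>
    let ⟨v, hv⟩ := hc i; ⟨rowOf v, (hσ v).symm.trans hv⟩
  exact ⟨c ∘ anchor, Finite.injective_iff_surjective.2 hsurj, hc1, hσ⟩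

end Order14

open Order14

/-- There is a graph `G` of order 14 with `χ(G) = 5` satisfying
conditions (1)-(3) of the necessity theorem for every proper coloring with exactly
5 color classes ordered by nondecreasing size, yet `es_χ(G) ≤ 4 < 6 = ⌊14/5⌋·⌊14/5+1⌋`;
so those conditions are not sufficient for `r = 5`, `n ≡ 4 (mod 5)`. -/
theorem exists_order14_counterexample :
    ∃ G : SimpleGraph (Fin 14), G.chromaticNumber = 5 ∧
      (∀ c : G.Coloring (Fin 5), Surjective c →
        (∀ i j : Fin 5, i ≤ j → (classOf c i).card ≤ (classOf c j).card) →
        ((classOf c (0 : Fin 5)).card = 2 ∧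
         (∀ i : Fin 5, i ≠ 0 → (classOf c i).card = 3) ∧
         (∀ i : Fin 5, i ≠ 0 → ∀ u v : Fin 14,
           (u ∈ classOf c (0 : Fin 5) ∨ u ∈ classOf c i) →
           (v ∈ classOf c (0 : Fin 5) ∨ v ∈ classOf c i) →
           (G.Adj u v ↔
             ((u ∈ classOf c (0 : Fin 5) ∧ v ∈ classOf c i) ∨
              (u ∈ classOf c i ∧ v ∈ classOf c (0 : Fin 5))))) ∧
         (∀ (i : Fin 5) (v : Fin 14), v ∈ classOf c i → ∀ j : Fin 5, j ≠ i →
           2 ≤ eCC G {v} (classOf c j)))) ∧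
      esChi G ≤ 4 ∧ esChi G < 14 / 5 * (14 / 5 + 1) := by
  refine ⟨graph, chromaticNumber_eq_five, fun c hc hsort => ?_, esChi_le_four,
    esChi_le_four.trans_lt (by norm_num)⟩
  obtain ⟨σ, hσ, hσ0, hcσ⟩ := exists_comp_rowOf c hc fun i => hsort 0 i (Fin.zero_le i)
  have hclass : ∀ a, classOf c (σ a) = classOf rowColoring a :=
    classOf_apply_eq_of_comp (c' := rowColoring) hσ hcσ
  have hσsurj := Finite.surjective_of_injective hσ
  rw [← hσ0, hclass]
  refine ⟨card_classOf_rowColoring_zero, ?_, ?_, ?_⟩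
  · intro i hi
    obtain ⟨a, rfl⟩ := hσsurj i
    rw [hclass]
    exact card_classOf_rowColoring_of_ne_zero (hσ.ne_iff.1 hi)
  · intro i hi
    obtain ⟨a, rfl⟩ := hσsurj i
    rw [hclass]
    exact adj_iff_of_mem_classOf_rowColoring a (hσ.ne_iff.1 hi)
  · intro i v hv j hji
    obtain ⟨a, rfl⟩ := hσsurj i
    obtain ⟨b, rfl⟩ := hσsurj j
    rw [hclass] at hv ⊢
    exact two_le_eCC_classOf_rowColoring v b
      ((mem_classOf_rowColoring.1 hv).trans_ne (hσ.ne_iff.1 hji).symm)
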